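/- arXiv:1710.07657 — 3 statements merged into one kernel-verified Lean document; each statement's English description precedes it below -/
import Mathlib

section
/- Let t_f > t₀, suppose the controllability Gramian W(t_f) is invertible, let x_f ∈ ℝⁿ, and define the minimum-energy control u*(t) = Bᵀ e^{Aᵀ(t_f−t)} W(t_f)⁻¹ (x_f − g(t_f)). Then the controlled trajectory x(t) = g(t) + ∫_{t₀}^{t} e^{A(t−τ)} B u*(τ) dτ satisfies x(t_f) = x_f; that is, u* steers the system from x₀ at time t₀ exactly to x_f at time t_f. -/
/-! The response at time `t_f` to `u*` is `(∫ e^{A(t_f−τ)} B Bᵀ e^{Aᵀ(t_f−τ)} dτ) W(t_f)⁻¹ (x_f − g(t_f))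
= W(t_f) W(t_f)⁻¹ (x_f − g(t_f))`, so it moves `g(t_f)` exactly onto `x_f`. -/

open Matrix MeasureTheory

attribute [local instance] Matrix.normedAddCommGroup Matrix.normedSpace

theorem Matrix.exp_continuous {ι 𝕜 : Type*} [Fintype ι] [DecidableEq ι] [RCLike 𝕜] :
    Continuous (NormedSpace.exp : Matrix ι ι 𝕜 → Matrix ι ι 𝕜) :=
  -- `exp` only sees the topology, so any Banach-algebra norm on matrices will do.
  open scoped Norms.Operator in NormedSpace.exp_continuous

theorem Matrix.intervalIntegral_mulVec {ι κ 𝕜 : Type*} [Fintype ι] [Fintype κ] [RCLike 𝕜]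
    {M : ℝ → Matrix ι κ 𝕜} (hM : Continuous M) (a b : ℝ) (v : κ → 𝕜) :
    ∫ τ in a..b, M τ *ᵥ v = (∫ τ in a..b, M τ) *ᵥ v :=
  (LinearMap.toContinuousLinearMap ((mulVecBilin 𝕜 𝕜).flip v)).intervalIntegral_comp_comm
    (hM.intervalIntegrable a b)

theorem gramian_control_steers_to_target_general
    (n m : ℕ) (A : Matrix (Fin n) (Fin n) ℝ) (B : Matrix (Fin n) (Fin m) ℝ)
    (t₀ : ℝ)
    (g : ℝ → Fin n → ℝ)
    (W : ℝ → Matrix (Fin n) (Fin n) ℝ)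
    (hW : ∀ t, W t = ∫ τ in t₀..t,
        NormedSpace.exp ((t - τ) • A) * B * Bᵀ * NormedSpace.exp ((t - τ) • Aᵀ))
    (tf : ℝ)
    (hinv : IsUnit (W tf).det)
    (xf : Fin n → ℝ)
    (ustar : ℝ → Fin m → ℝ)
    (hustar : ∀ t, ustar t = Bᵀ.mulVec ((NormedSpace.exp ((tf - t) • Aᵀ)).mulVec
        ((W tf)⁻¹.mulVec (xf - g tf))))
    (x : ℝ → Fin n → ℝ)
    (hx : ∀ t, x t = g t
        + ∫ τ in t₀..t, (NormedSpace.exp ((t - τ) • A)).mulVec (B.mulVec (ustar τ))) :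
    x tf = xf := by
  set v := (W tf)⁻¹ *ᵥ (xf - g tf)
  have hexp_delay (M : Matrix (Fin n) (Fin n) ℝ) :
      Continuous fun τ : ℝ => NormedSpace.exp ((tf - τ) • M) :=
    exp_continuous.comp ((continuous_const.sub continuous_id).smul continuous_const)
  have hintegrand : Continuous fun τ : ℝ =>
      NormedSpace.exp ((tf - τ) • A) * B * Bᵀ * NormedSpace.exp ((tf - τ) • Aᵀ) :=
    ((((hexp_delay A).matrix_mul continuous_const).matrix_mul continuous_const).matrix_mul
      (hexp_delay Aᵀ))
  have hresponse : ∫ τ in t₀..tf, NormedSpace.exp ((tf - τ) • A) *ᵥ (B *ᵥ ustar τ)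
      = W tf *ᵥ v := by
    simp only [hustar, mulVec_mulVec, ← Matrix.mul_assoc]
    rw [intervalIntegral_mulVec hintegrand, hW]
  rw [hx, hresponse, mulVec_mulVec, mul_nonsing_inv _ hinv, one_mulVec, add_sub_cancel]

/-- If `t_f > t₀` and the controllability Gramian `W(t_f)` is invertible,
the minimum-energy control `u*(t) = Bᵀ e^{Aᵀ(t_f−t)} W(t_f)⁻¹ (x_f − g(t_f))` steers the
system from `x₀` at time `t₀` exactly to `x_f` at time `t_f`:
the controlled trajectory `x(t) = g(t) + ∫_{t₀}^{t} e^{A(t−τ)} B u*(τ) dτ` satisfies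
`x(t_f) = x_f`. -/
theorem gramian_control_steers_to_target
    (n m : ℕ) (A : Matrix (Fin n) (Fin n) ℝ) (B : Matrix (Fin n) (Fin m) ℝ)
    (f x₀ : Fin n → ℝ) (t₀ : ℝ)
    (g : ℝ → Fin n → ℝ)
    (hg : ∀ t, g t = (NormedSpace.exp ((t - t₀) • A)).mulVec x₀
        + ∫ τ in t₀..t, (NormedSpace.exp ((t - τ) • A)).mulVec f)
    (W : ℝ → Matrix (Fin n) (Fin n) ℝ)
    (hW : ∀ t, W t = ∫ τ in t₀..t,
        NormedSpace.exp ((t - τ) • A) * B * Bᵀ * NormedSpace.exp ((t - τ) • Aᵀ))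
    (tf : ℝ) (htf : t₀ < tf)
    (hinv : IsUnit (W tf).det)
    (xf : Fin n → ℝ)
    (ustar : ℝ → Fin m → ℝ)
    (hustar : ∀ t, ustar t = Bᵀ.mulVec ((NormedSpace.exp ((tf - t) • Aᵀ)).mulVec
        ((W tf)⁻¹.mulVec (xf - g tf))))
    (x : ℝ → Fin n → ℝ)
    (hx : ∀ t, x t = g t
        + ∫ τ in t₀..t, (NormedSpace.exp ((t - τ) • A)).mulVec (B.mulVec (ustar τ))) :
    x tf = xf :=
  gramian_control_steers_to_target_general n m A B t₀ g W hW tf hinv xf ustar hustar x hx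
end

section
/- Let t_f > t₀, suppose the controllability Gramian W(t_f) is invertible, let x_f ∈ ℝⁿ, and let u*(t) = Bᵀ e^{Aᵀ(t_f−t)} W(t_f)⁻¹ (x_f − g(t_f)) be the minimum-energy control. Then the total energy consumed equals the Gramian quadratic form: ∫_{t₀}^{t_f} ‖u*(t)‖² dt = (x_f − g(t_f))ᵀ W(t_f)⁻¹ (x_f − g(t_f)). -/
/-!
Put `v = W(t_f)⁻¹ (x_f - g(t_f))`. Since `e^{s Aᵀ} = (e^{s A})ᵀ`, the energy density `‖u*(t)‖²` is
the quadratic form of `v` under the Gramian integrand `e^{A(t_f-t)} B Bᵀ e^{Aᵀ(t_f-t)}`, and the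
quadratic form commutes with the integral. So the energy is `vᵀ W(t_f) v`, which equals
`(x_f - g(t_f))ᵀ W(t_f)⁻¹ (x_f - g(t_f))`.
-/

open Matrix MeasureTheory

section

-- Any submultiplicative norm makes `exp` continuous, and all of them induce the product topology.
attribute [local instance] Matrix.linftyOpNormedRing Matrix.linftyOpNormedAlgebra

@[fun_prop]
theorem Continuous.matrix_exp_smul {X ι : Type*} [TopologicalSpace X] [Fintype ι] [DecidableEq ι]
    {f : X → ℝ} (hf : Continuous f) (A : Matrix ι ι ℝ) :
    Continuous fun x => NormedSpace.exp (f x • A) :=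
  NormedSpace.exp_continuous.comp (hf.smul continuous_const)

end

theorem Matrix.exp_smul_transpose {ι : Type*} [Fintype ι] [DecidableEq ι]
    (A : Matrix ι ι ℝ) (t : ℝ) : NormedSpace.exp (t • Aᵀ) = (NormedSpace.exp (t • A))ᵀ := by
  rw [← transpose_smul, exp_transpose]

theorem Matrix.dotProduct_transpose_mulVec_self {ι κ R : Type*} [Fintype ι] [Fintype κ]
    [CommSemiring R] (M : Matrix ι κ R) (v : ι → R) :
    (Mᵀ *ᵥ v) ⬝ᵥ (Mᵀ *ᵥ v) = v ⬝ᵥ (M * Mᵀ) *ᵥ v := by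
  rw [← mulVec_mulVec, dotProduct_mulVec v, mulVec_transpose]

theorem Matrix.sum_sq_transpose_mulVec_mulVec {ι κ : Type*} [Fintype ι] [Fintype κ]
    (E : Matrix ι ι ℝ) (B : Matrix ι κ ℝ) (v : ι → ℝ) :
    ∑ k, (Bᵀ *ᵥ Eᵀ *ᵥ v) k ^ 2 = v ⬝ᵥ (E * B * Bᵀ * Eᵀ) *ᵥ v := by
  have h := dotProduct_transpose_mulVec_self (E * B) v
  rw [transpose_mul, ← mulVec_mulVec, ← Matrix.mul_assoc] at h
  simpa only [dotProduct, sq] using h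

attribute [local instance] Matrix.normedAddCommGroup Matrix.normedSpace

theorem intervalIntegral.integral_dotProduct_mulVec {ι κ : Type*} [Fintype ι] [Fintype κ]
    {F : ℝ → Matrix ι κ ℝ} {a b : ℝ} (hF : Continuous F) (v : ι → ℝ) (w : κ → ℝ) :
    ∫ t in a..b, v ⬝ᵥ F t *ᵥ w = v ⬝ᵥ (∫ t in a..b, F t) *ᵥ w :=
  let L : Matrix ι κ ℝ →L[ℝ] ℝ := LinearMap.toContinuousLinearMap
    { toFun := fun M => v ⬝ᵥ M *ᵥ w
      map_add' := fun M N => by simp only [add_mulVec, dotProduct_add]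
      map_smul' := fun c M => by simp only [smul_mulVec, dotProduct_smul, RingHom.id_apply] }
  L.intervalIntegral_comp_comm (hF.intervalIntegrable a b)

theorem gramian_control_energy_eq_quadratic_form_general
    (n m : ℕ) (A : Matrix (Fin n) (Fin n) ℝ) (B : Matrix (Fin n) (Fin m) ℝ)
    (t₀ : ℝ)
    (g : ℝ → Fin n → ℝ)
    (W : ℝ → Matrix (Fin n) (Fin n) ℝ)
    (hW : ∀ t, W t = ∫ τ in t₀..t,
        NormedSpace.exp ((t - τ) • A) * B * Bᵀ * NormedSpace.exp ((t - τ) • Aᵀ))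
    (tf : ℝ)
    (hinv : IsUnit (W tf).det)
    (xf : Fin n → ℝ)
    (ustar : ℝ → Fin m → ℝ)
    (hustar : ∀ t, ustar t = Bᵀ.mulVec ((NormedSpace.exp ((tf - t) • Aᵀ)).mulVec
        ((W tf)⁻¹.mulVec (xf - g tf)))) :
    (∫ t in t₀..tf, ∑ k, (ustar t k) ^ 2)
      = (xf - g tf) ⬝ᵥ (W tf)⁻¹.mulVec (xf - g tf) := by
  set v := (W tf)⁻¹ *ᵥ (xf - g tf)
  have hcont : Continuous fun τ : ℝ =>
      NormedSpace.exp ((tf - τ) • A) * B * Bᵀ * NormedSpace.exp ((tf - τ) • Aᵀ) := by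
    fun_prop
  calc (∫ t in t₀..tf, ∑ k, (ustar t k) ^ 2)
      = ∫ t in t₀..tf, v ⬝ᵥ (NormedSpace.exp ((tf - t) • A) * B * Bᵀ
          * NormedSpace.exp ((tf - t) • Aᵀ)) *ᵥ v := by
        refine intervalIntegral.integral_congr fun t _ => ?_
        rw [hustar, exp_smul_transpose, sum_sq_transpose_mulVec_mulVec]
    _ = v ⬝ᵥ W tf *ᵥ v := by
        rw [intervalIntegral.integral_dotProduct_mulVec hcont, hW]
    _ = (xf - g tf) ⬝ᵥ v := by
        rw [mulVec_mulVec, mul_nonsing_inv _ hinv, one_mulVec, dotProduct_comm]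

/-- If `t_f > t₀` and the controllability Gramian `W(t_f)` is invertible,
the total energy consumed by the minimum-energy control
`u*(t) = Bᵀ e^{Aᵀ(t_f−t)} W(t_f)⁻¹ (x_f − g(t_f))` equals the Gramian quadratic form:
`∫_{t₀}^{t_f} ‖u*(t)‖² dt = (x_f − g(t_f))ᵀ W(t_f)⁻¹ (x_f − g(t_f))`. -/
theorem gramian_control_energy_eq_quadratic_form
    (n m : ℕ) (A : Matrix (Fin n) (Fin n) ℝ) (B : Matrix (Fin n) (Fin m) ℝ)
    (f x₀ : Fin n → ℝ) (t₀ : ℝ)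
    (g : ℝ → Fin n → ℝ)
    (hg : ∀ t, g t = (NormedSpace.exp ((t - t₀) • A)).mulVec x₀
        + ∫ τ in t₀..t, (NormedSpace.exp ((t - τ) • A)).mulVec f)
    (W : ℝ → Matrix (Fin n) (Fin n) ℝ)
    (hW : ∀ t, W t = ∫ τ in t₀..t,
        NormedSpace.exp ((t - τ) • A) * B * Bᵀ * NormedSpace.exp ((t - τ) • Aᵀ))
    (tf : ℝ) (htf : t₀ < tf)
    (hinv : IsUnit (W tf).det)
    (xf : Fin n → ℝ)
    (ustar : ℝ → Fin m → ℝ)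
    (hustar : ∀ t, ustar t = Bᵀ.mulVec ((NormedSpace.exp ((tf - t) • Aᵀ)).mulVec
        ((W tf)⁻¹.mulVec (xf - g tf)))) :
    (∫ t in t₀..tf, ∑ k, (ustar t k) ^ 2)
      = (xf - g tf) ⬝ᵥ (W tf)⁻¹.mulVec (xf - g tf) :=
  gramian_control_energy_eq_quadratic_form_general n m A B t₀ g W hW tf hinv xf ustar hustar
end

section
/- Let t_f > t₀, suppose the controllability Gramian W(t_f) is invertible, and let x_f ∈ ℝⁿ. For any continuous control u : [t₀, t_f] → ℝᵐ whose controlled trajectory x(t) = g(t) + ∫_{t₀}^{t} e^{A(t−τ)} B u(τ) dτ reaches x(t_f) = x_f, the energy is bounded below by the Gramian quadratic form: ∫_{t₀}^{t_f} ‖u(t)‖² dt ≥ (x_f − g(t_f))ᵀ W(t_f)⁻¹ (x_f − g(t_f)). That is, the Gramian-based control is the minimum-energy control. -/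
open Matrix MeasureTheory

/-!
With `K τ = e^{A(t_f-τ)} B`, the reached state gives `y := x_f - g(t_f) = ∫ K u` and the Gramian is
`W = ∫ K Kᵀ`. Put `c = W⁻¹ y` and `v = Kᵀ c`, the minimum-energy control. Then
`∫ ⟨u, v⟩ = ⟨c, ∫ K u⟩ = ⟨c, y⟩` and `∫ ‖v‖² = ⟨c, W c⟩ = ⟨c, y⟩`, so integrating
`‖u‖² ≥ 2⟨u, v⟩ - ‖v‖²` yields `∫ ‖u‖² ≥ ⟨c, y⟩ = yᵀ W⁻¹ y`.
-/

-- Matrices have no global normed-ring instance; the `L∞` operator norm is borrowed here, before the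
-- entrywise norm used for integrals is made an instance, since it induces the same topology.
theorem Matrix.continuous_exp_smul {ι : Type*} [Fintype ι] [DecidableEq ι] (A : Matrix ι ι ℝ) :
    Continuous fun t : ℝ => NormedSpace.exp (t • A) := by
  let : NormedRing (Matrix ι ι ℝ) := Matrix.linftyOpNormedRing
  let : NormedAlgebra ℝ (Matrix ι ι ℝ) := Matrix.linftyOpNormedAlgebra
  let : NormedAlgebra ℚ (Matrix ι ι ℝ) := .restrictScalars ℚ ℝ _
  have : CompleteSpace (Matrix ι ι ℝ) := FiniteDimensional.complete ℝ _
  exact NormedSpace.exp_continuous.comp (continuous_id.smul continuous_const)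

attribute [local instance] Matrix.normedAddCommGroup Matrix.normedSpace

namespace Matrix

variable {ι κ : Type*} [Fintype ι] [Fintype κ]

theorem two_mul_dotProduct_sub_dotProduct_self_le (u v : κ → ℝ) :
    2 * (u ⬝ᵥ v) - v ⬝ᵥ v ≤ u ⬝ᵥ u := by
  have h := dotProduct_star_self_nonneg (u - v)
  simp only [star_trivial, sub_dotProduct, dotProduct_sub, dotProduct_comm v u] at h
  linarith

variable {a b : ℝ}

theorem intervalIntegral_dotProduct (c : ι → ℝ) {w : ℝ → ι → ℝ}
    (hw : IntervalIntegrable w volume a b) :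
    ∫ τ in a..b, c ⬝ᵥ w τ = c ⬝ᵥ ∫ τ in a..b, w τ :=
  (dotProductBilin ℝ ℝ c).toContinuousLinearMap.intervalIntegral_comp_comm hw

theorem intervalIntegral_mulVec_s8 {M : ℝ → Matrix ι κ ℝ} (hM : Continuous M) (c : κ → ℝ) :
    ∫ τ in a..b, M τ *ᵥ c = (∫ τ in a..b, M τ) *ᵥ c :=
  ((mulVecBilin ℝ ℝ).flip c).toContinuousLinearMap.intervalIntegral_comp_comm
    (hM.intervalIntegrable _ _)

theorem two_mul_intervalIntegral_dotProduct_sub_le (hab : a ≤ b) {u v : ℝ → κ → ℝ}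
    (hu : Continuous u) (hv : Continuous v) :
    2 * (∫ τ in a..b, u τ ⬝ᵥ v τ) - ∫ τ in a..b, v τ ⬝ᵥ v τ ≤ ∫ τ in a..b, u τ ⬝ᵥ u τ := by
  have huv : Continuous fun τ => 2 * (u τ ⬝ᵥ v τ) := continuous_const.mul (hu.dotProduct hv)
  rw [← intervalIntegral.integral_const_mul, ← intervalIntegral.integral_sub
    (huv.intervalIntegrable _ _) ((hv.dotProduct hv).intervalIntegrable _ _)]
  exact intervalIntegral.integral_mono_on hab ((huv.sub (hv.dotProduct hv)).intervalIntegrable _ _)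
    ((hu.dotProduct hu).intervalIntegrable _ _)
    fun τ _ => two_mul_dotProduct_sub_dotProduct_self_le (u τ) (v τ)

variable {K : ℝ → Matrix ι κ ℝ}

theorem intervalIntegral_dotProduct_transpose_mulVec (hK : Continuous K) {u : ℝ → κ → ℝ}
    (hu : Continuous u) (c : ι → ℝ) :
    ∫ τ in a..b, u τ ⬝ᵥ (K τ)ᵀ *ᵥ c = c ⬝ᵥ ∫ τ in a..b, K τ *ᵥ u τ := by
  rw [← intervalIntegral_dotProduct c ((hK.matrix_mulVec hu).intervalIntegrable _ _)]
  congr 1 with τ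
  rw [dotProduct_mulVec, vecMul_transpose, dotProduct_comm]

theorem intervalIntegral_transpose_mulVec_dotProduct_self (hK : Continuous K) (c : ι → ℝ) :
    ∫ τ in a..b, (K τ)ᵀ *ᵥ c ⬝ᵥ (K τ)ᵀ *ᵥ c = c ⬝ᵥ (∫ τ in a..b, K τ * (K τ)ᵀ) *ᵥ c := by
  have hKKt : Continuous fun τ => K τ * (K τ)ᵀ := hK.matrix_mul hK.matrix_transpose
  rw [← intervalIntegral_mulVec_s8 hKKt, ← intervalIntegral_dotProduct c
    ((hKKt.matrix_mulVec continuous_const).intervalIntegrable _ _)]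
  congr 1 with τ
  rw [← mulVec_mulVec, dotProduct_mulVec, vecMul_transpose, dotProduct_comm]

theorem dotProduct_inv_gramian_mulVec_le_energy [DecidableEq ι] (hab : a ≤ b) (hK : Continuous K)
    (hW : IsUnit (∫ τ in a..b, K τ * (K τ)ᵀ).det) {u : ℝ → κ → ℝ} (hu : Continuous u) :
    (∫ τ in a..b, K τ *ᵥ u τ) ⬝ᵥ (∫ τ in a..b, K τ * (K τ)ᵀ)⁻¹ *ᵥ ∫ τ in a..b, K τ *ᵥ u τ
      ≤ ∫ τ in a..b, u τ ⬝ᵥ u τ := by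
  set y := ∫ τ in a..b, K τ *ᵥ u τ
  set W := ∫ τ in a..b, K τ * (K τ)ᵀ
  set c := W⁻¹ *ᵥ y
  have hWc : W *ᵥ c = y := by rw [mulVec_mulVec, mul_nonsing_inv _ hW, one_mulVec]
  have hv : Continuous fun τ => (K τ)ᵀ *ᵥ c := hK.matrix_transpose.matrix_mulVec continuous_const
  have key := two_mul_intervalIntegral_dotProduct_sub_le hab hu hv
  rw [intervalIntegral_dotProduct_transpose_mulVec hK hu,
    intervalIntegral_transpose_mulVec_dotProduct_self hK, hWc] at key
  rw [dotProduct_comm]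
  linarith

end Matrix

theorem energy_lower_bound_gramian_general
    (n m : ℕ) (A : Matrix (Fin n) (Fin n) ℝ) (B : Matrix (Fin n) (Fin m) ℝ)
    (t₀ : ℝ)
    (g : ℝ → Fin n → ℝ)
    (W : ℝ → Matrix (Fin n) (Fin n) ℝ)
    (hW : ∀ t, W t = ∫ τ in t₀..t,
        NormedSpace.exp ((t - τ) • A) * B * Bᵀ * NormedSpace.exp ((t - τ) • Aᵀ))
    (tf : ℝ) (htf : t₀ < tf)
    (hinv : IsUnit (W tf).det)
    (xf : Fin n → ℝ)
    (u : ℝ → Fin m → ℝ) (hu : Continuous u)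
    (x : ℝ → Fin n → ℝ)
    (hx : ∀ t, x t = g t
        + ∫ τ in t₀..t, (NormedSpace.exp ((t - τ) • A)).mulVec (B.mulVec (u τ)))
    (hreach : x tf = xf) :
    (∫ t in t₀..tf, ∑ k, (u t k) ^ 2)
      ≥ (xf - g tf) ⬝ᵥ (W tf)⁻¹.mulVec (xf - g tf) := by
  set K : ℝ → Matrix (Fin n) (Fin m) ℝ := fun τ => NormedSpace.exp ((tf - τ) • A) * B
  have hK : Continuous K :=
    ((continuous_exp_smul A).comp (continuous_const.sub continuous_id)).matrix_mul continuous_const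
  have hKW : ∫ τ in t₀..tf, K τ * (K τ)ᵀ = W tf := by
    simp only [hW, K, transpose_mul, ← exp_transpose, transpose_smul, Matrix.mul_assoc]
  have hKy : ∫ τ in t₀..tf, K τ *ᵥ u τ = xf - g tf := by
    simp only [← hreach, hx, K, ← mulVec_mulVec, add_sub_cancel_left]
  have henergy : (fun t => ∑ k, u t k ^ 2) = fun t => u t ⬝ᵥ u t := by
    simp only [dotProduct, sq]
  rw [ge_iff_le, henergy, ← hKW, ← hKy]
  exact dotProduct_inv_gramian_mulVec_le_energy htf.le hK (hKW ▸ hinv) hu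

/-- If `t_f > t₀` and the controllability Gramian `W(t_f)` is invertible,
then for any continuous control `u` whose controlled trajectory
`x(t) = g(t) + ∫_{t₀}^{t} e^{A(t−τ)} B u(τ) dτ` reaches `x(t_f) = x_f`, the energy is
bounded below by the Gramian quadratic form:
`∫_{t₀}^{t_f} ‖u(t)‖² dt ≥ (x_f − g(t_f))ᵀ W(t_f)⁻¹ (x_f − g(t_f))`. -/
theorem energy_lower_bound_gramian
    (n m : ℕ) (A : Matrix (Fin n) (Fin n) ℝ) (B : Matrix (Fin n) (Fin m) ℝ)
    (f x₀ : Fin n → ℝ) (t₀ : ℝ)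
    (g : ℝ → Fin n → ℝ)
    (hg : ∀ t, g t = (NormedSpace.exp ((t - t₀) • A)).mulVec x₀
        + ∫ τ in t₀..t, (NormedSpace.exp ((t - τ) • A)).mulVec f)
    (W : ℝ → Matrix (Fin n) (Fin n) ℝ)
    (hW : ∀ t, W t = ∫ τ in t₀..t,
        NormedSpace.exp ((t - τ) • A) * B * Bᵀ * NormedSpace.exp ((t - τ) • Aᵀ))
    (tf : ℝ) (htf : t₀ < tf)
    (hinv : IsUnit (W tf).det)
    (xf : Fin n → ℝ)
    (u : ℝ → Fin m → ℝ) (hu : Continuous u)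
    (x : ℝ → Fin n → ℝ)
    (hx : ∀ t, x t = g t
        + ∫ τ in t₀..t, (NormedSpace.exp ((t - τ) • A)).mulVec (B.mulVec (u τ)))
    (hreach : x tf = xf) :
    (∫ t in t₀..tf, ∑ k, (u t k) ^ 2)
      ≥ (xf - g tf) ⬝ᵥ (W tf)⁻¹.mulVec (xf - g tf) :=
  energy_lower_bound_gramian_general n m A B t₀ g W hW tf htf hinv xf u hu x hx hreach
end
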